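/- arXiv:1208.0017 — 6 statements merged into one kernel-verified Lean document; each statement's English description precedes it below -/
import Mathlib

section
/- Assume f : ℝ → ℝ is continuous and satisfies (f₂). Let u be a solution of the IVP with initial value α defined on all of [0,∞), and suppose lim_{r→∞} u(r) = ℓ for some real number ℓ. Then lim_{r→∞} u'(r) = 0 and f(ℓ) = 0. -/
/-!
Along the radial flow the energy `E = (m-1)/m |u'|^m + F(u)` satisfies
`E' = -((N-1)/r) u' φ_m(u') ≤ 0`. If `u → ℓ`, the mean value theorem on `[n, n+1]` gives points
`r_n → ∞` with `u'(r_n) → 0`, so `E(r_n) → F(ℓ)` and, `E` being monotone, `E → F(ℓ)`; hence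
`|u'|^m = m/(m-1) (E - F(u)) → 0`. Then `φ_m(u') → 0` while its derivative
`-((N-1)/r) φ_m(u') - f(u)` tends to `-f(ℓ)`, and a convergent function cannot have a nonzero
limiting derivative, so `f(ℓ) = 0`.
-/

open Set Filter MeasureTheory

noncomputable def phim (m x : ℝ) : ℝ := |x| ^ (m - 2) * x

noncomputable def Fint (f : ℝ → ℝ) (s : ℝ) : ℝ := ∫ t in (0:ℝ)..s, f t

noncomputable def Qfun (N m : ℝ) (f : ℝ → ℝ) (s : ℝ) : ℝ :=
  m * N * Fint f s - (N - m) * s * f s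

/-- `u` (with derivative function `u'`) is a solution of the radial quasilinear
equation on the set `J`. -/
def IsSolutionOn (N m : ℝ) (f : ℝ → ℝ) (J : Set ℝ) (u u' : ℝ → ℝ) : Prop :=
  (∀ r ∈ J, HasDerivWithinAt u (u' r) J r) ∧ ContinuousOn u' J ∧
    ∃ w' : ℝ → ℝ,
      (∀ r ∈ J ∩ Set.Ioi (0:ℝ),
        HasDerivWithinAt (fun t => phim m (u' t)) (w' r) (J ∩ Set.Ioi (0:ℝ)) r) ∧
      ContinuousOn w' (J ∩ Set.Ioi (0:ℝ)) ∧
      ∀ r ∈ J ∩ Set.Ioi (0:ℝ), w' r + ((N - 1) / r) * phim m (u' r) + f (u r) = 0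

def IsIVPSolutionOn (N m : ℝ) (f : ℝ → ℝ) (α : ℝ) (J : Set ℝ) (u u' : ℝ → ℝ) : Prop :=
  IsSolutionOn N m f J u u' ∧ u 0 = α ∧ u' 0 = 0

/-- Admissible domains for the IVP: `[0,∞)` or `[0,R)` with `0 < R`. -/
def IVPDomain (J : Set ℝ) : Prop :=
  J = Set.Ici (0:ℝ) ∨ ∃ R : ℝ, 0 < R ∧ J = Set.Ico (0:ℝ) R

/-- The solution `u` of the IVP on `J` cannot be extended to a solution on a
strictly larger admissible domain. -/
def Noncontinuable (N m : ℝ) (f : ℝ → ℝ) (α : ℝ) (J : Set ℝ) (u u' : ℝ → ℝ) : Prop :=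
  ∀ J' : Set ℝ, IVPDomain J' → J ⊂ J' →
    ¬ ∃ v v' : ℝ → ℝ, IsIVPSolutionOn N m f α J' v v' ∧ Set.EqOn v u J ∧ Set.EqOn v' u' J

open Classical in
/-- The filter describing the approach to the right endpoint of an IVP domain. -/
noncomputable def domEnd (J : Set ℝ) : Filter ℝ :=
  if J = Set.Ici (0:ℝ) then Filter.atTop else nhdsWithin (sSup J) (Set.Iio (sSup J))

def LocLipschitzOn (f : ℝ → ℝ) (S : Set ℝ) : Prop :=
  ∀ x ∈ S, ∃ ε : ℝ, 0 < ε ∧ ∃ K : NNReal, LipschitzOnWith K f (Metric.ball x ε ∩ S)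

/-- Assumption (f₂). -/
structure Hf2 (f : ℝ → ℝ) (βm βp : ℝ) (γm γp : EReal) : Prop where
  hβm : βm < 0
  hβp : 0 < βp
  hFneg : ∀ s : ℝ, s ∈ Set.Ioo βm βp → s ≠ 0 → Fint f s < 0
  hFβm : Fint f βm = 0
  hFβp : Fint f βp = 0
  hγp : (βp : EReal) < γp
  hγm : γm < (βm : EReal)
  hfpos : ∀ s : ℝ, βp < s → (s : EReal) < γp → 0 < f s
  hfneg : ∀ s : ℝ, γm < (s : EReal) → s < βm → f s < 0
  hγpzero : ∀ s : ℝ, (s : EReal) = γp → f s = 0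
  hγmzero : ∀ s : ℝ, (s : EReal) = γm → f s = 0
  hlim : ∃ L : EReal,
    Filter.Tendsto (fun s : ℝ => (Fint f s : EReal))
      (Filter.comap Real.toEReal (nhdsWithin γp (Set.Iio γp))) (nhds L) ∧
    Filter.Tendsto (fun s : ℝ => (Fint f s : EReal))
      (Filter.comap Real.toEReal (nhdsWithin γm (Set.Ioi γm))) (nhds L)
  hlip : LocLipschitzOn f {s : ℝ | (γm < (s : EReal) ∧ s < 0) ∨ (0 < s ∧ (s : EReal) < γp)}

/-- Assumption (f₃). -/
def Hf3 (N m : ℝ) (f : ℝ → ℝ) (βm βp : ℝ) (γm γp : EReal) : Prop :=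
  (γp = ⊤ →
    (∃ βb : ℝ, βp < βb ∧ ∀ s : ℝ, βb ≤ s → 0 ≤ Qfun N m f s) ∧
    (∃ θ : ℝ, θ ∈ Set.Ioo (0:ℝ) 1 ∧
      Filter.Tendsto (fun s : ℝ =>
        sInf ((fun p : ℝ × ℝ =>
          Qfun N m f p.2 * ((|s| ^ (m - 2) * s) / f p.1) ^ (N / m)) ''
            (Set.Icc (θ * s) s ×ˢ Set.Icc (θ * s) s)))
        Filter.atTop Filter.atTop)) ∧
  (γm = ⊥ →
    (∃ βb : ℝ, -βb < βm ∧ ∀ s : ℝ, s ≤ -βb → 0 ≤ Qfun N m f s) ∧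
    (∃ θ : ℝ, θ ∈ Set.Ioo (0:ℝ) 1 ∧
      Filter.Tendsto (fun s : ℝ =>
        sInf ((fun p : ℝ × ℝ =>
          Qfun N m f p.2 * ((|s| ^ (m - 2) * s) / f p.1) ^ (N / m)) ''
            (Set.Icc s (θ * s) ×ˢ Set.Icc s (θ * s))))
        Filter.atBot Filter.atTop))

/-- Assumption (f₄). -/
def Hf4 (N m : ℝ) (f : ℝ → ℝ) (βm βp : ℝ) (γm γp : EReal) : Prop :=
  (γp ≠ ⊤ → ∃ L₀ : ℝ, 0 < L₀ ∧ ∃ βb : ℝ, βp < βb ∧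
    ∀ s : ℝ, βb ≤ s → (s : EReal) < γp → f s ≤ L₀ * (γp.toReal - s) ^ (m - 1)) ∧
  (γm ≠ ⊥ → ∃ L₀ : ℝ, 0 < L₀ ∧ ∃ βb : ℝ, -βm < βb ∧
    ∀ s : ℝ, γm < (s : EReal) → s ≤ -βb → -f s ≤ L₀ * (s - γm.toReal) ^ (m - 1))

open Set Filter Topology Real

theorem exists_seq_tendsto_deriv_zero {g g' : ℝ → ℝ} {l : ℝ} (hg : Tendsto g atTop (𝓝 l))
    (hd : ∀ᶠ x in atTop, HasDerivAt g (g' x) x) :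
    ∃ t : ℕ → ℝ, Tendsto t atTop atTop ∧ Tendsto (g' ∘ t) atTop (𝓝 0) := by
  obtain ⟨T, hT⟩ := eventually_atTop.1 hd
  have hmvt : ∀ n : ℕ, ∃ c ∈ Ioo (T + n) (T + n + 1), g' c = g (T + n + 1) - g (T + n) := by
    intro n
    have hd' : ∀ x ∈ Icc (T + n) (T + n + 1), HasDerivAt g (g' x) x := fun x hx =>
      hT x (by linarith [hx.1, n.cast_nonneg (α := ℝ)])
    obtain ⟨c, hc, hgc⟩ := exists_hasDerivAt_eq_slope g g' (lt_add_one _)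
      (fun x hx => (hd' x hx).continuousAt.continuousWithinAt)
      (fun x hx => hd' x (Ioo_subset_Icc_self hx))
    exact ⟨c, hc, by rw [hgc, add_sub_cancel_left, div_one]⟩
  choose t ht hgt using hmvt
  have hshift : Tendsto (fun n : ℕ => T + n) atTop atTop :=
    tendsto_atTop_add_const_left _ _ tendsto_natCast_atTop_atTop
  refine ⟨t, tendsto_atTop_mono (fun n => (ht n).1.le) hshift, ?_⟩
  have hdiff := (hg.comp (tendsto_atTop_add_const_right _ 1 hshift)).sub (hg.comp hshift)
  rw [sub_self] at hdiff
  exact hdiff.congr fun n => (hgt n).symm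

theorem eq_zero_of_tendsto_deriv {g g' : ℝ → ℝ} {l L : ℝ} (hg : Tendsto g atTop (𝓝 l))
    (hd : ∀ᶠ x in atTop, HasDerivAt g (g' x) x) (hg' : Tendsto g' atTop (𝓝 L)) : L = 0 := by
  obtain ⟨t, ht, hg't⟩ := exists_seq_tendsto_deriv_zero hg hd
  exact tendsto_nhds_unique (hg'.comp ht) hg't

theorem AntitoneOn.tendsto_atTop_of_seq {g : ℝ → ℝ} {a L : ℝ} {t : ℕ → ℝ}
    (hg : AntitoneOn g (Ioi a)) (ht : Tendsto t atTop atTop)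
    (hgt : Tendsto (g ∘ t) atTop (𝓝 L)) : Tendsto g atTop (𝓝 L) := by
  have hge : ∀ x > a, L ≤ g x := fun x hx =>
    le_of_tendsto hgt ((ht.eventually_ge_atTop x).mono fun n hn => hg hx (hx.trans_le hn) hn)
  refine tendsto_order.2 ⟨fun y hy => eventually_atTop.2 ⟨a + 1, fun x hx =>
    hy.trans_le (hge x (by linarith))⟩, fun y hy => ?_⟩
  obtain ⟨n, hn, hna⟩ := ((hgt.eventually (gt_mem_nhds hy)).and (ht.eventually_gt_atTop a)).exists
  exact eventually_atTop.2 ⟨t n, fun x hx => (hg hna (hna.trans_le hx) hx).trans_lt hn⟩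

theorem abs_phim {m : ℝ} (hm : m ≠ 1) (x : ℝ) : |phim m x| = |x| ^ (m - 1) := by
  rcases eq_or_ne x 0 with rfl | hx
  · simp [phim, zero_rpow (sub_ne_zero.2 hm)]
  rw [phim, abs_mul, abs_of_nonneg (rpow_nonneg (abs_nonneg x) _), sub_eq_add_neg m 1,
    show m + -1 = m - 2 + 1 by ring, rpow_add_one (abs_ne_zero.2 hx)]

theorem mul_phim_nonneg (m x : ℝ) : 0 ≤ x * phim m x := by
  rw [phim, mul_left_comm]
  exact mul_nonneg (rpow_nonneg (abs_nonneg x) _) (mul_self_nonneg x)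

theorem tendsto_phim_zero {m : ℝ} (hm : 1 < m) : Tendsto (phim m) (𝓝 0) (𝓝 0) := by
  have hpow : Tendsto (fun x : ℝ => |x| ^ (m - 1)) (𝓝 0) (𝓝 0) := by
    simpa [Function.comp_def, zero_rpow (sub_pos.2 hm).ne'] using
      ((continuous_rpow_const (sub_pos.2 hm).le).comp continuous_abs).tendsto 0
  exact squeeze_zero_norm (fun x => (abs_phim hm.ne' x).le) hpow

theorem phim_phim_of_holderConjugate {m q : ℝ} (h : m.HolderConjugate q) (x : ℝ) :
    phim q (phim m x) = x := by
  rcases eq_or_ne x 0 with rfl | hx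
  · simp [phim]
  rw [phim, abs_phim h.lt.ne', phim, ← mul_assoc, ← rpow_mul (abs_nonneg x),
    ← rpow_add (abs_pos.2 hx), show (m - 1) * (q - 2) + (m - 2) = 0 by
      linear_combination h.sub_one_mul_conj, rpow_zero, one_mul]

theorem abs_phim_rpow_of_holderConjugate {m q : ℝ} (h : m.HolderConjugate q) (x : ℝ) :
    |phim m x| ^ q = |x| ^ m := by
  rw [abs_phim h.lt.ne', ← rpow_mul (abs_nonneg x), h.sub_one_mul_conj]

theorem hasDerivAt_Fint {f : ℝ → ℝ} (hf : Continuous f) (x : ℝ) :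
    HasDerivAt (Fint f) (f x) x :=
  (hf.integral_hasStrictDerivAt 0 x).hasDerivAt

theorem continuous_Fint {f : ℝ → ℝ} (hf : Continuous f) : Continuous (Fint f) :=
  continuous_iff_continuousAt.2 fun x => (hasDerivAt_Fint hf x).continuousAt

noncomputable def energy (m : ℝ) (f : ℝ → ℝ) (u u' : ℝ → ℝ) (r : ℝ) : ℝ :=
  (m - 1) / m * |u' r| ^ m + Fint f (u r)

namespace IsSolutionOn

variable {N m : ℝ} {f : ℝ → ℝ} {J : Set ℝ} {u u' : ℝ → ℝ} {t : ℝ}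

theorem hasDerivAt (hsol : IsSolutionOn N m f J u u') (hJ : J ∈ 𝓝 t) :
    HasDerivAt u (u' t) t :=
  (hsol.1 t (mem_of_mem_nhds hJ)).hasDerivAt hJ

theorem hasDerivAt_phim (hsol : IsSolutionOn N m f J u u') (hJ : J ∈ 𝓝 t) (ht : 0 < t) :
    HasDerivAt (fun s => phim m (u' s)) (-((N - 1) / t * phim m (u' t)) - f (u t)) t := by
  obtain ⟨-, -, w', hw', -, heq⟩ := hsol
  have htJ : t ∈ J ∩ Ioi 0 := ⟨mem_of_mem_nhds hJ, ht⟩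
  refine ((hw' t htJ).hasDerivAt (inter_mem hJ (Ioi_mem_nhds ht))).congr_deriv ?_
  linarith [heq t htJ]

theorem hasDerivAt_energy (hm : 1 < m) (hf : Continuous f) (hsol : IsSolutionOn N m f J u u')
    (hJ : J ∈ 𝓝 t) (ht : 0 < t) :
    HasDerivAt (energy m f u u') (-((N - 1) / t * (u' t * phim m (u' t)))) t := by
  set q := conjExponent m
  have hq : m.HolderConjugate q := .conjExponent hm
  have hE : energy m f u u' = fun s => |phim m (u' s)| ^ q / q + Fint f (u s) := by
    funext s
    rw [energy, abs_phim_rpow_of_holderConjugate hq, hq.conjugate_eq]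
    field_simp
  have hinv : |phim m (u' t)| ^ (q - 2) * phim m (u' t) = u' t :=
    phim_phim_of_holderConjugate hq (u' t)
  have hw := ((hasDerivAt_abs_rpow _ hq.symm.lt).comp t (hsol.hasDerivAt_phim hJ ht)).div_const q
  have hFu := (hasDerivAt_Fint hf (u t)).comp t (hsol.hasDerivAt hJ)
  rw [hE]
  refine (hw.add hFu).congr_deriv ?_
  rw [mul_assoc q, hinv]
  field_simp [hq.symm.ne_zero]
  ring

theorem antitoneOn_energy (hm : 1 < m) (hN : 1 ≤ N) (hf : Continuous f)
    (hsol : IsSolutionOn N m f (Ici 0) u u') : AntitoneOn (energy m f u u') (Ioi 0) := by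
  have hd : ∀ t ∈ Ioi (0 : ℝ), HasDerivAt (energy m f u u')
      (-((N - 1) / t * (u' t * phim m (u' t)))) t :=
    fun t ht => hsol.hasDerivAt_energy hm hf (Ici_mem_nhds ht) ht
  refine antitoneOn_of_deriv_nonpos (convex_Ioi 0)
    (fun t ht => (hd t ht).continuousAt.continuousWithinAt) ?_ ?_ <;> rw [interior_Ioi]
  · exact fun t ht => (hd t ht).differentiableAt.differentiableWithinAt
  · intro t ht
    rw [(hd t ht).deriv]
    exact neg_nonpos.2 <|
      mul_nonneg (div_nonneg (sub_nonneg.2 hN) ht.le) (mul_phim_nonneg m (u' t))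

theorem tendsto_deriv_zero (hm : 1 < m) (hN : 1 ≤ N) (hf : Continuous f)
    (hsol : IsSolutionOn N m f (Ici 0) u u') {l : ℝ} (hl : Tendsto u atTop (𝓝 l)) :
    Tendsto u' atTop (𝓝 0) := by
  have hm0 : 0 < m := by linarith
  have hm1 : m - 1 ≠ 0 := by linarith
  obtain ⟨t, ht, hu't⟩ := exists_seq_tendsto_deriv_zero hl
    ((eventually_gt_atTop 0).mono fun s hs => hsol.hasDerivAt (Ici_mem_nhds hs))
  have hFu : Tendsto (fun s => Fint f (u s)) atTop (𝓝 (Fint f l)) :=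
    ((continuous_Fint hf).tendsto l).comp hl
  have hpow : Tendsto (fun x : ℝ => |x| ^ m) (𝓝 0) (𝓝 0) := by
    simpa [Function.comp_def, zero_rpow hm0.ne'] using
      ((continuous_rpow_const hm0.le).comp continuous_abs).tendsto 0
  have hEt : Tendsto (energy m f u u' ∘ t) atTop (𝓝 (Fint f l)) := by
    rw [show Fint f l = (m - 1) / m * 0 + Fint f l by ring]
    exact ((hpow.comp hu't).const_mul ((m - 1) / m)).add (hFu.comp ht)
  have hE := (hsol.antitoneOn_energy hm hN hf).tendsto_atTop_of_seq ht hEt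
  have hpow_u' : Tendsto (fun s => |u' s| ^ m) atTop (𝓝 0) := by
    convert (hE.sub hFu).const_mul (m / (m - 1)) using 2 with s
    · simp only [energy]
      field_simp
      ring
    · ring
  have habs : Tendsto (fun s => |u' s|) atTop (𝓝 0) := by
    simpa [← rpow_mul (abs_nonneg _), mul_inv_cancel₀ hm0.ne', zero_rpow (inv_ne_zero hm0.ne')]
      using hpow_u'.rpow_const (p := m⁻¹) (Or.inr (inv_nonneg.2 hm0.le))
  exact squeeze_zero_norm (fun s => le_rfl) habs

end IsSolutionOn

theorem ivp_solution_limit_general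
    (N m : ℝ) (hm : 1 < m) (hNm : m ≤ N) (f : ℝ → ℝ) (hf : Continuous f)
    (α : ℝ) (u u' : ℝ → ℝ)
    (hu : IsIVPSolutionOn N m f α (Set.Ici (0:ℝ)) u u')
    (l : ℝ) (hl : Filter.Tendsto u Filter.atTop (nhds l)) :
    Filter.Tendsto u' Filter.atTop (nhds 0) ∧ f l = 0 := by
  have hsol := hu.1
  have hu' := hsol.tendsto_deriv_zero hm (by linarith) hf hl
  have hw : Tendsto (fun t => phim m (u' t)) atTop (𝓝 0) := (tendsto_phim_zero hm).comp hu'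
  have hw' : Tendsto (fun t => -((N - 1) / t * phim m (u' t)) - f (u t)) atTop (𝓝 (-f l)) := by
    have hcoef : Tendsto (fun t : ℝ => (N - 1) / t) atTop (𝓝 0) :=
      tendsto_const_nhds.div_atTop tendsto_id
    simpa using ((hcoef.mul hw).neg).sub ((hf.tendsto l).comp hl)
  have hderiv : ∀ᶠ t in atTop, HasDerivAt (fun s => phim m (u' s))
      (-((N - 1) / t * phim m (u' t)) - f (u t)) t :=
    (eventually_gt_atTop 0).mono fun t ht => hsol.hasDerivAt_phim (Ici_mem_nhds ht) ht
  exact ⟨hu', neg_eq_zero.1 (eq_zero_of_tendsto_deriv hw hderiv hw')⟩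

/-- if a global solution of the IVP converges, then its derivative
tends to `0` and the limit is a zero of `f`. -/
theorem ivp_solution_limit
    (N m : ℝ) (hm : 1 < m) (hNm : m ≤ N) (f : ℝ → ℝ) (hf : Continuous f)
    (βm βp : ℝ) (γm γp : EReal) (hf2 : Hf2 f βm βp γm γp)
    (α : ℝ) (u u' : ℝ → ℝ)
    (hu : IsIVPSolutionOn N m f α (Set.Ici (0:ℝ)) u u')
    (l : ℝ) (hl : Filter.Tendsto u Filter.atTop (nhds l)) :
    Filter.Tendsto u' Filter.atTop (nhds 0) ∧ f l = 0 :=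
  ivp_solution_limit_general N m hm hNm f hf α u u' hu l hl
end

section
/- Let f : ℝ → ℝ be continuous and let u be a solution of the radial equation on an interval J ⊆ (0,∞). Then the energy r ↦ I(r) = |u'(r)|^m/m' + F(u(r)) is differentiable on J with I'(r) = −((N−1)/r)·|u'(r)|^m for every r ∈ J; in particular I is nonincreasing on J. -/
open Set Filter MeasureTheory

/-! Along a solution, `φ_m(u')` is differentiable, while `u'` itself need not be. Writing the
kinetic term as `|φ_m(u')|^{m'}/m'` turns it into a `C¹` function of `φ_m(u')` with derivative
`φ_{m'}(φ_m(u')) = u'`, so the chain rule and the equation give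
`I' = u'·((φ_m(u'))' + f(u)) = -((N-1)/r)·u'·φ_m(u') = -((N-1)/r)|u'|^m ≤ 0`. -/

section Phim

variable {p q : ℝ}

lemma abs_phim_s3 (hp : p ≠ 1) (v : ℝ) : |phim p v| = |v| ^ (p - 1) := by
  rcases eq_or_ne v 0 with rfl | hv
  · simp [phim, Real.zero_rpow (sub_ne_zero.mpr hp)]
  · rw [phim, abs_mul, abs_of_nonneg (Real.rpow_nonneg (abs_nonneg v) _),
      show p - 1 = (p - 2) + 1 by ring, Real.rpow_add_one (abs_ne_zero.mpr hv)]

lemma mul_phim_self (hp : p ≠ 0) (v : ℝ) : v * phim p v = |v| ^ p := by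
  rcases eq_or_ne v 0 with rfl | hv
  · simp [phim, Real.zero_rpow hp]
  · rw [phim, show v * (|v| ^ (p - 2) * v) = |v| ^ (p - 2) * |v| ^ (2 : ℝ) by
      rw [Real.rpow_two, sq_abs]; ring, ← Real.rpow_add (abs_pos.mpr hv)]
    norm_num

lemma abs_phim_rpow_of_holderConjugate_s3 (hpq : p.HolderConjugate q) (v : ℝ) :
    |phim p v| ^ q = |v| ^ p := by
  rw [abs_phim_s3 hpq.lt.ne', ← Real.rpow_mul (abs_nonneg v), hpq.sub_one_mul_conj]

lemma phim_phim_of_holderConjugate_s3 (hpq : p.HolderConjugate q) (v : ℝ) :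
    phim q (phim p v) = v := by
  rcases eq_or_ne v 0 with rfl | hv
  · simp [phim]
  · have hexp : (p - 1) * (q - 2) + (p - 2) = 0 := by
      linear_combination hpq.mul_eq_add
    rw [phim, abs_phim_s3 hpq.lt.ne', ← Real.rpow_mul (abs_nonneg v), phim, ← mul_assoc,
      ← Real.rpow_add (abs_pos.mpr hv), hexp, Real.rpow_zero, one_mul]

lemma hasDerivAt_abs_rpow_div_self (hp : 1 < p) (x : ℝ) :
    HasDerivAt (fun x : ℝ => |x| ^ p / p) (phim p x) x := by
  refine ((hasDerivAt_abs_rpow x hp).div_const p).congr_deriv ?_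
  rw [phim, mul_assoc, mul_div_cancel_left₀ _ (by positivity)]

lemma HasDerivWithinAt.abs_rpow_div_of_phim (hpq : p.HolderConjugate q) {v : ℝ → ℝ} {w' r : ℝ}
    {s : Set ℝ} (h : HasDerivWithinAt (fun t => phim p (v t)) w' s r) :
    HasDerivWithinAt (fun t => |v t| ^ p / q) (v r * w') s r := by
  have := (hasDerivAt_abs_rpow_div_self hpq.symm.lt (phim p (v r))).comp_hasDerivWithinAt r h
  simpa only [Function.comp_def, abs_phim_rpow_of_holderConjugate_s3 hpq,
    phim_phim_of_holderConjugate_s3 hpq] using this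

end Phim

lemma Convex.antitoneOn_of_hasDerivWithinAt_nonpos {D : Set ℝ} (hD : Convex ℝ D)
    {g g' : ℝ → ℝ} (hg : ∀ x ∈ D, HasDerivWithinAt g (g' x) D x) (hg' : ∀ x ∈ D, g' x ≤ 0) :
    AntitoneOn g D :=
  _root_.antitoneOn_of_hasDerivWithinAt_nonpos hD (fun x hx => (hg x hx).continuousWithinAt)
    (fun x hx => ((hg x (interior_subset hx)).hasDerivAt
      (mem_interior_iff_mem_nhds.mp hx)).hasDerivWithinAt)
    (fun x hx => hg' x (interior_subset hx))

noncomputable def radialEnergy (m : ℝ) (f u u' : ℝ → ℝ) (t : ℝ) : ℝ :=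
  |u' t| ^ m / (m / (m - 1)) + Fint f (u t)

lemma IsSolutionOn.hasDerivWithinAt_radialEnergy {N m : ℝ} (hm : 1 < m) {f : ℝ → ℝ}
    (hf : Continuous f) {J : Set ℝ} {u u' : ℝ → ℝ} (hu : IsSolutionOn N m f J u u')
    {r : ℝ} (hr : r ∈ J ∩ Ioi 0) :
    HasDerivWithinAt (radialEnergy m f u u') (-((N - 1) / r) * |u' r| ^ m) (J ∩ Ioi 0) r := by
  obtain ⟨hu_deriv, -, w', hw_deriv, -, hequation⟩ := hu
  have hkinetic : HasDerivWithinAt (fun t => |u' t| ^ m / (m / (m - 1))) (u' r * w' r)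
      (J ∩ Ioi 0) r :=
    (hw_deriv r hr).abs_rpow_div_of_phim (Real.HolderConjugate.conjExponent hm)
  have hpotential : HasDerivWithinAt (fun t => Fint f (u t)) (f (u r) * u' r) (J ∩ Ioi 0) r :=
    (hf.integral_hasStrictDerivAt 0 (u r)).hasDerivAt.comp_hasDerivWithinAt r
      ((hu_deriv r hr.1).mono inter_subset_left)
  refine (hkinetic.add hpotential).congr_deriv ?_
  rw [← mul_phim_self (by linarith : m ≠ 0)]
  linear_combination u' r * hequation r hr

/-- the energy `I(r) = |u'(r)|^m/m' + F(u(r))` is differentiable with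
`I'(r) = -((N-1)/r)|u'(r)|^m`; in particular `I` is nonincreasing. -/
theorem energy_derivative
    (N m : ℝ) (hm : 1 < m) (hNm : m ≤ N) (f : ℝ → ℝ) (hf : Continuous f)
    (J : Set ℝ) (hJc : J.OrdConnected) (hJ0 : J ⊆ Set.Ioi (0:ℝ))
    (u u' : ℝ → ℝ) (hu : IsSolutionOn N m f J u u') :
    (∀ r ∈ J, HasDerivWithinAt
        (fun t => |u' t| ^ m / (m / (m - 1)) + Fint f (u t))
        (-((N - 1) / r) * |u' r| ^ m) J r) ∧
    AntitoneOn (fun t => |u' t| ^ m / (m / (m - 1)) + Fint f (u t)) J := by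
  have hJ : J ∩ Ioi 0 = J := inter_eq_left.mpr hJ0
  have hderiv : ∀ r ∈ J,
      HasDerivWithinAt (radialEnergy m f u u') (-((N - 1) / r) * |u' r| ^ m) J r := by
    intro r hr
    simpa only [hJ] using hu.hasDerivWithinAt_radialEnergy hm hf ⟨hr, hJ0 hr⟩
  refine ⟨hderiv, hJc.convex.antitoneOn_of_hasDerivWithinAt_nonpos hderiv fun r hr => ?_⟩
  have hcoeff : 0 ≤ (N - 1) / r := div_nonneg (by linarith) (hJ0 hr).le
  exact mul_nonpos_of_nonpos_of_nonneg (neg_nonpos.mpr hcoeff) (by positivity)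
end

section
/- Let N ≥ m > 2, m' = m/(m−1), r₀ > 0, and let f : ℝ → ℝ be locally Lipschitz in a neighborhood of u₀ with f(u₀) ≠ 0. Suppose (u₁, v₁) and (u₂, v₂) are two C¹ solutions on [r₀, r₀+η] (η > 0) of the system u' = |v|^(m'−2)·v, v' = −((N−1)/r)·v − f(u), with u₁(r₀) = u₂(r₀) = u₀ and v₁(r₀) = v₂(r₀) = 0. Then there exists δ ∈ (0, η] such that (u₁, v₁) = (u₂, v₂) on [r₀, r₀+δ]. -/
open Set Filter MeasureTheory

/-!
Since `f u₀ ≠ 0`, both `v₁` and `v₂` leave `0` linearly: `vᵢ r = -f u₀ * (r - r₀) + o(r - r₀)`,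
so the segment between `v₁ r` and `v₂ r` stays at distance `≥ |f u₀| (r - r₀) / 2` from `0`.
There `φ(v) = |v| ^ (m' - 2) * v` is Lipschitz with constant `≲ (r - r₀) ^ (m' - 2)`.
If `M` is the maximum of `|u₁ - u₂| + |v₁ - v₂|` on `[r₀, r₀ + δ]`, the `v`-equation gives
`|v₁ - v₂| ≤ C M (r - r₀)`, hence `|u₁' - u₂'| ≤ C' M (r - r₀) ^ (m' - 1)` and
`|u₁ - u₂| ≤ C' M (r - r₀) ^ m' / m'`. So `M ≤ (C' δ ^ m' / m' + C δ) M`, and `M = 0` once `δ` is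
small.
-/

open Topology

lemma hasDerivAt_phim (p : ℝ) {x : ℝ} (hx : x ≠ 0) :
    HasDerivAt (phim p) ((p - 1) * |x| ^ (p - 2)) x := by
  have hx' : |x| ≠ 0 := abs_ne_zero.2 hx
  have h : HasDerivAt (fun y => |y| ^ (p - 2) * y) _ x :=
    ((hasDerivAt_abs hx).rpow_const (p := p - 2) (Or.inl hx')).mul (hasDerivAt_id' x)
  refine h.congr_deriv ?_
  rw [Real.rpow_sub_one hx', show ∀ s : ℝ, s * (p - 2) * (|x| ^ (p - 2) / |x|) * x
    = (p - 2) * (s * x) * |x| ^ (p - 2) / |x| by intro s; ring, sign_mul_self]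
  field_simp
  ring

lemma abs_phim_sub_le {p ρ a b : ℝ} (hp1 : 1 ≤ p) (hp2 : p ≤ 2) (hρ : 0 < ρ)
    (hab : ∀ y ∈ uIcc a b, ρ ≤ |y|) :
    |phim p a - phim p b| ≤ (p - 1) * ρ ^ (p - 2) * |a - b| := by
  refine (convex_uIcc a b).norm_image_sub_le_of_norm_hasDerivWithin_le
    (fun y hy => (hasDerivAt_phim p (abs_pos.1 (hρ.trans_le (hab y hy)))).hasDerivWithinAt)
    (fun y hy => ?_) right_mem_uIcc left_mem_uIcc
  rw [Real.norm_eq_abs, abs_of_nonneg (by positivity)]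
  exact mul_le_mul_of_nonneg_left (Real.rpow_le_rpow_of_nonpos hρ (hab y hy) (by linarith))
    (by linarith)

lemma sub_abs_le_abs_of_mem_uIcc {a b y z ρ : ℝ} (ha : |a + z| ≤ ρ) (hb : |b + z| ≤ ρ)
    (hy : y ∈ uIcc a b) : |z| - ρ ≤ |y| := by
  have hyz : |y + z| ≤ ρ := by
    rw [abs_le] at *
    rcases mem_uIcc.1 hy with h | h <;> constructor <;> linarith
  have := abs_sub (y + z) y
  rw [add_sub_cancel_left] at this
  linarith

lemma le_mul_rpow_of_deriv_le {w w' : ℝ → ℝ} {a b C p : ℝ} (hp : 0 < p)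
    (hw : ∀ x ∈ Icc a b, HasDerivWithinAt w (w' x) (Icc a b) x) (hw0 : w a = 0)
    (hbound : ∀ x ∈ Ioo a b, w' x ≤ C * p * (x - a) ^ (p - 1)) :
    ∀ x ∈ Icc a b, w x ≤ C * (x - a) ^ p := by
  have hB : ∀ x ∈ Ioo a b, HasDerivAt (fun t => C * (t - a) ^ p) (C * p * (x - a) ^ (p - 1)) x :=
    fun x hx => by
      simpa [mul_assoc] using (((hasDerivAt_id x).sub_const a).rpow_const
        (p := p) (Or.inl (sub_pos.2 hx.1).ne')).const_mul C
  have hBc : ContinuousOn (fun t => C * (t - a) ^ p) (Icc a b) := fun x _ =>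
    (((continuousAt_id.sub continuousAt_const).rpow_const (Or.inr hp.le)).const_mul C
      ).continuousWithinAt
  have hmono : MonotoneOn (fun t => C * (t - a) ^ p - w t) (Icc a b) := by
    refine monotoneOn_of_hasDerivWithinAt_nonneg (convex_Icc a b)
      (f' := fun x => C * p * (x - a) ^ (p - 1) - w' x)
      (hBc.sub fun x hx => (hw x hx).continuousWithinAt) (fun x hx => ?_) (fun x hx => ?_)
    · rw [interior_Icc] at hx ⊢
      exact ((hB x hx).sub ((hw x (Ioo_subset_Icc_self hx)).hasDerivAt
        (Icc_mem_nhds hx.1 hx.2))).hasDerivWithinAt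
    · rw [interior_Icc] at hx
      exact sub_nonneg.2 (hbound x hx)
  intro x hx
  have := hmono (left_mem_Icc.2 (hx.1.trans hx.2)) hx hx.1
  simp only [sub_self, Real.zero_rpow hp.ne', mul_zero, hw0] at this
  linarith

lemma abs_le_mul_rpow_of_abs_deriv_le {w w' : ℝ → ℝ} {a b C p : ℝ} (hp : 0 < p)
    (hw : ∀ x ∈ Icc a b, HasDerivWithinAt w (w' x) (Icc a b) x) (hw0 : w a = 0)
    (hbound : ∀ x ∈ Ioo a b, |w' x| ≤ C * p * (x - a) ^ (p - 1)) :
    ∀ x ∈ Icc a b, |w x| ≤ C * (x - a) ^ p := by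
  intro x hx
  refine abs_le.2 ⟨?_, le_mul_rpow_of_deriv_le hp hw hw0 (fun y hy => (le_abs_self _).trans
    (hbound y hy)) x hx⟩
  have := le_mul_rpow_of_deriv_le hp (fun y hy => (hw y hy).neg) (by simp [hw0])
    (fun y hy => (neg_le_abs _).trans (hbound y hy)) x hx
  rw [Pi.neg_apply] at this
  linarith

section SingularGronwall

variable {w z w' z' : ℝ → ℝ} {a δ A L p : ℝ}

lemma abs_add_abs_le_mul_of_singular_gronwall (hp : 0 < p) (hA : 0 ≤ A) (hL : 0 ≤ L)
    (hw : ∀ x ∈ Icc a (a + δ), HasDerivWithinAt w (w' x) (Icc a (a + δ)) x)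
    (hz : ∀ x ∈ Icc a (a + δ), HasDerivWithinAt z (z' x) (Icc a (a + δ)) x)
    (hw0 : w a = 0) (hz0 : z a = 0)
    (hz' : ∀ x ∈ Icc a (a + δ), |z' x| ≤ A * (|w x| + |z x|))
    (hw' : ∀ x ∈ Ioo a (a + δ), |w' x| ≤ L * (x - a) ^ (p - 2) * |z x|)
    {M : ℝ} (hM : ∀ x ∈ Icc a (a + δ), |w x| + |z x| ≤ M) :
    ∀ x ∈ Icc a (a + δ), |w x| + |z x| ≤ (L * A / p * δ ^ p + A * δ) * M := by
  intro x hx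
  have hM0 : 0 ≤ M := (by positivity : 0 ≤ |w x| + |z x|).trans (hM x hx)
  have hzM : ∀ y ∈ Icc a (a + δ), |z y| ≤ A * M * (y - a) := by
    simpa [hz0] using norm_image_sub_le_of_norm_deriv_le_segment' hz fun y hy =>
      (hz' y (Ico_subset_Icc_self hy)).trans
        (mul_le_mul_of_nonneg_left (hM y (Ico_subset_Icc_self hy)) hA)
  have hwM : |w x| ≤ L * A * M / p * (x - a) ^ p := by
    refine abs_le_mul_rpow_of_abs_deriv_le hp hw hw0 (fun y hy => ?_) x hx
    have hya : 0 < y - a := sub_pos.2 hy.1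
    calc |w' y| ≤ L * (y - a) ^ (p - 2) * (A * M * (y - a)) :=
          (hw' y hy).trans (mul_le_mul_of_nonneg_left (hzM y (Ioo_subset_Icc_self hy))
            (by positivity))
      _ = L * A * M / p * p * (y - a) ^ (p - 1) := by
          rw [show p - 1 = p - 2 + 1 by ring, Real.rpow_add_one hya.ne']
          field_simp
  have hxa : x - a ≤ δ := by linarith [hx.2]
  have hxap : (x - a) ^ p ≤ δ ^ p := Real.rpow_le_rpow (sub_nonneg.2 hx.1) hxa hp.le
  calc |w x| + |z x| ≤ L * A * M / p * δ ^ p + A * M * δ := by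
        gcongr
        · exact hwM.trans (by gcongr)
        · exact (hzM x hx).trans (by gcongr)
    _ = (L * A / p * δ ^ p + A * δ) * M := by ring

lemma eq_zero_of_singular_gronwall (hp : 0 < p) (hA : 0 ≤ A) (hL : 0 ≤ L) (hδ : 0 ≤ δ)
    (hw : ∀ x ∈ Icc a (a + δ), HasDerivWithinAt w (w' x) (Icc a (a + δ)) x)
    (hz : ∀ x ∈ Icc a (a + δ), HasDerivWithinAt z (z' x) (Icc a (a + δ)) x)
    (hw0 : w a = 0) (hz0 : z a = 0)
    (hz' : ∀ x ∈ Icc a (a + δ), |z' x| ≤ A * (|w x| + |z x|))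
    (hw' : ∀ x ∈ Ioo a (a + δ), |w' x| ≤ L * (x - a) ^ (p - 2) * |z x|)
    (hsmall : L * A / p * δ ^ p + A * δ < 1) :
    ∀ x ∈ Icc a (a + δ), w x = 0 ∧ z x = 0 := by
  have hwc : ContinuousOn w (Icc a (a + δ)) := fun x hx => (hw x hx).continuousWithinAt
  have hzc : ContinuousOn z (Icc a (a + δ)) := fun x hx => (hz x hx).continuousWithinAt
  obtain ⟨x₀, hx₀, hmax⟩ :=
    isCompact_Icc.exists_isMaxOn (nonempty_Icc.2 (by linarith)) (hwc.abs.add hzc.abs)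
  have hle := abs_add_abs_le_mul_of_singular_gronwall hp hA hL hw hz hw0 hz0 hz' hw'
    (M := |w x₀| + |z x₀|) (fun x hx => hmax hx) x₀ hx₀
  have hM : |w x₀| + |z x₀| ≤ 0 := by nlinarith [abs_nonneg (w x₀), abs_nonneg (z x₀)]
  intro x hx
  have hx' : |w x| + |z x| ≤ |w x₀| + |z x₀| := hmax hx
  exact ⟨abs_eq_zero.1 (by linarith [abs_nonneg (w x), abs_nonneg (z x)]),
    abs_eq_zero.1 (by linarith [abs_nonneg (w x), abs_nonneg (z x)])⟩

end SingularGronwall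

lemma eventually_mul_rpow_add_mul_lt_one (B A : ℝ) {p : ℝ} (hp : 0 < p) :
    ∀ᶠ δ in 𝓝 (0 : ℝ), B * δ ^ p + A * δ < 1 := by
  have h : Continuous fun δ : ℝ => B * δ ^ p + A * δ := by
    fun_prop (disch := exact hp.le)
  exact (h.tendsto' 0 0 (by simp [Real.zero_rpow hp.ne'])).eventually_lt_const one_pos

lemma abs_phim_sub_le_of_abs_add_mul_le {p a b f₀ t : ℝ} (hp1 : 1 ≤ p) (hp2 : p ≤ 2)
    (hf₀ : f₀ ≠ 0) (ht : 0 < t) (ha : |a + f₀ * t| ≤ |f₀| / 2 * t)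
    (hb : |b + f₀ * t| ≤ |f₀| / 2 * t) :
    |phim p a - phim p b| ≤ (p - 1) * (|f₀| / 2) ^ (p - 2) * t ^ (p - 2) * |a - b| := by
  have hρ : 0 < |f₀| / 2 * t := by positivity
  have hab : ∀ y ∈ uIcc a b, |f₀| / 2 * t ≤ |y| := fun y hy => by
    have := sub_abs_le_abs_of_mem_uIcc ha hb hy
    rw [abs_mul, abs_of_pos ht] at this
    linarith
  calc |phim p a - phim p b| ≤ (p - 1) * (|f₀| / 2 * t) ^ (p - 2) * |a - b| :=
        abs_phim_sub_le hp1 hp2 hρ hab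
    _ = _ := by rw [Real.mul_rpow (by positivity) ht.le]; ring

lemma abs_radial_rhs_sub_le {f : ℝ → ℝ} {s : Set ℝ} {K : NNReal} (hf : LipschitzOnWith K f s)
    {N r₀ r x₁ x₂ y₁ y₂ : ℝ} (hr₀ : 0 < r₀) (hr : r₀ ≤ r) (hx₁ : x₁ ∈ s) (hx₂ : x₂ ∈ s) :
    |(-((N - 1) / r) * y₁ - f x₁) - (-((N - 1) / r) * y₂ - f x₂)|
      ≤ (|N - 1| / r₀ + K) * (|x₁ - x₂| + |y₁ - y₂|) := by
  have hcoef : |(N - 1) / r| ≤ |N - 1| / r₀ := by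
    rw [abs_div, abs_of_pos (hr₀.trans_le hr)]
    exact div_le_div_of_nonneg_left (abs_nonneg _) hr₀ hr
  have hlip : |f x₁ - f x₂| ≤ K * |x₁ - x₂| := by
    simpa [Real.dist_eq] using hf.dist_le_mul x₁ hx₁ x₂ hx₂
  calc |(-((N - 1) / r) * y₁ - f x₁) - (-((N - 1) / r) * y₂ - f x₂)|
      = |-((N - 1) / r * (y₁ - y₂)) - (f x₁ - f x₂)| := by congr 1; ring
    _ ≤ |(N - 1) / r| * |y₁ - y₂| + K * |x₁ - x₂| := by
        rw [← abs_mul]; exact (abs_sub _ _).trans (by rw [abs_neg]; gcongr)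
    _ ≤ |N - 1| / r₀ * |y₁ - y₂| + K * |x₁ - x₂| := by gcongr
    _ ≤ (|N - 1| / r₀ + K) * (|x₁ - x₂| + |y₁ - y₂|) := by
        nlinarith [abs_nonneg (x₁ - x₂), abs_nonneg (y₁ - y₂), K.coe_nonneg,
          div_nonneg (abs_nonneg (N - 1)) hr₀.le]

def IsSystemSolutionOn (N p : ℝ) (f : ℝ → ℝ) (I : Set ℝ) (u v : ℝ → ℝ) : Prop :=
  ∀ r ∈ I, HasDerivWithinAt u (phim p (v r)) I r ∧
    HasDerivWithinAt v (-((N - 1) / r) * v r - f (u r)) I r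

namespace IsSystemSolutionOn

variable {N p r₀ : ℝ} {f : ℝ → ℝ} {u v : ℝ → ℝ}

lemma mono {I J : Set ℝ} (h : IsSystemSolutionOn N p f I u v) (hJI : J ⊆ I) :
    IsSystemSolutionOn N p f J u v :=
  fun r hr => ⟨(h r (hJI hr)).1.mono hJI, (h r (hJI hr)).2.mono hJI⟩

lemma eventually_near_initial {b u₀ ε c : ℝ} (h : IsSystemSolutionOn N p f (Icc r₀ b) u v)
    (hr₀ : 0 < r₀) (hb : r₀ < b) (hf : ContinuousAt f u₀) (hu0 : u r₀ = u₀) (hv0 : v r₀ = 0)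
    (hε : 0 < ε) (hc : 0 < c) :
    ∀ᶠ r in 𝓝[≥] r₀, u r ∈ Metric.ball u₀ ε ∧ |-((N - 1) / r) * v r - f (u r) + f u₀| ≤ c := by
  have hr₀b : r₀ ∈ Icc r₀ b := left_mem_Icc.2 hb.le
  have hu : Tendsto u (𝓝[Icc r₀ b] r₀) (𝓝 u₀) := hu0 ▸ (h r₀ hr₀b).1.continuousWithinAt
  have hv : Tendsto v (𝓝[Icc r₀ b] r₀) (𝓝 0) := hv0 ▸ (h r₀ hr₀b).2.continuousWithinAt
  have hrhs : Tendsto (fun r => -((N - 1) / r) * v r - f (u r)) (𝓝[Icc r₀ b] r₀)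
      (𝓝 (-f u₀)) := by
    simpa using (((continuousAt_const.div continuousAt_id hr₀.ne').neg.continuousWithinAt
      (s := Icc r₀ b)).tendsto.mul hv).sub (hf.tendsto.comp hu)
  rw [← nhdsWithin_Icc_eq_nhdsGE hb]
  filter_upwards [hu (Metric.ball_mem_nhds _ hε), hrhs (Metric.closedBall_mem_nhds _ hc)]
    with r hur hr
  refine ⟨hur, ?_⟩
  rwa [mem_preimage, Metric.mem_closedBall, Real.dist_eq, sub_neg_eq_add] at hr

lemma abs_add_mul_sub_le {b f₀ c : ℝ} (h : IsSystemSolutionOn N p f (Icc r₀ b) u v)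
    (hv0 : v r₀ = 0) (hnear : ∀ r ∈ Icc r₀ b, |-((N - 1) / r) * v r - f (u r) + f₀| ≤ c) :
    ∀ r ∈ Icc r₀ b, |v r + f₀ * (r - r₀)| ≤ c * (r - r₀) := by
  have hg : ∀ r ∈ Icc r₀ b, HasDerivWithinAt (fun t => v t + f₀ * (t - r₀))
      (-((N - 1) / r) * v r - f (u r) + f₀) (Icc r₀ b) r := fun r hr =>
    (h r hr).2.add (by simpa using ((hasDerivWithinAt_id r _).sub_const r₀).const_mul f₀)
  simpa [hv0] using norm_image_sub_le_of_norm_deriv_le_segment' hg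
    fun r hr => hnear r (Ico_subset_Icc_self hr)

lemma eqOn_of_near_initial {δ f₀ : ℝ} {s : Set ℝ} {K : NNReal} {u₁ v₁ u₂ v₂ : ℝ → ℝ}
    (hp1 : 1 ≤ p) (hp2 : p ≤ 2) (hr₀ : 0 < r₀) (hδ : 0 ≤ δ) (hf₀ : f₀ ≠ 0)
    (hK : LipschitzOnWith K f s)
    (h₁ : IsSystemSolutionOn N p f (Icc r₀ (r₀ + δ)) u₁ v₁)
    (h₂ : IsSystemSolutionOn N p f (Icc r₀ (r₀ + δ)) u₂ v₂)
    (hnear₁ : ∀ r ∈ Icc r₀ (r₀ + δ),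
      u₁ r ∈ s ∧ |-((N - 1) / r) * v₁ r - f (u₁ r) + f₀| ≤ |f₀| / 2)
    (hnear₂ : ∀ r ∈ Icc r₀ (r₀ + δ),
      u₂ r ∈ s ∧ |-((N - 1) / r) * v₂ r - f (u₂ r) + f₀| ≤ |f₀| / 2)
    (hu0 : u₁ r₀ = u₂ r₀) (hv₁0 : v₁ r₀ = 0) (hv₂0 : v₂ r₀ = 0)
    (hsmall : (p - 1) * (|f₀| / 2) ^ (p - 2) * (|N - 1| / r₀ + K) / p * δ ^ p
      + (|N - 1| / r₀ + K) * δ < 1) :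
    ∀ r ∈ Icc r₀ (r₀ + δ), u₁ r = u₂ r ∧ v₁ r = v₂ r := by
  have hv₁ := h₁.abs_add_mul_sub_le hv₁0 fun r hr => (hnear₁ r hr).2
  have hv₂ := h₂.abs_add_mul_sub_le hv₂0 fun r hr => (hnear₂ r hr).2
  have hzero := eq_zero_of_singular_gronwall (w := fun r => u₁ r - u₂ r)
    (z := fun r => v₁ r - v₂ r) (by linarith) (by positivity)
    (mul_nonneg (by linarith) (by positivity)) hδ
    (fun r hr => (h₁ r hr).1.sub (h₂ r hr).1) (fun r hr => (h₁ r hr).2.sub (h₂ r hr).2)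
    (sub_eq_zero.2 hu0) (by simp [hv₁0, hv₂0])
    (fun r hr => abs_radial_rhs_sub_le hK hr₀ hr.1 (hnear₁ r hr).1 (hnear₂ r hr).1)
    (fun r hr => abs_phim_sub_le_of_abs_add_mul_le hp1 hp2 hf₀ (sub_pos.2 hr.1)
      (hv₁ r (Ioo_subset_Icc_self hr)) (hv₂ r (Ioo_subset_Icc_self hr)))
    hsmall
  exact fun r hr => (hzero r hr).imp sub_eq_zero.1 sub_eq_zero.1

end IsSystemSolutionOn

theorem system_local_uniqueness_general
    (N m : ℝ) (hm : 2 < m)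
    (r₀ η : ℝ) (hr₀ : 0 < r₀) (hη : 0 < η)
    (f : ℝ → ℝ) (u₀ : ℝ)
    (hlip : ∃ ε : ℝ, 0 < ε ∧ ∃ K : NNReal, LipschitzOnWith K f (Metric.ball u₀ ε))
    (hfu₀ : f u₀ ≠ 0)
    (u₁ v₁ u₂ v₂ : ℝ → ℝ)
    (h₁ : ∀ r ∈ Set.Icc r₀ (r₀ + η),
      HasDerivWithinAt u₁ (|v₁ r| ^ (m / (m - 1) - 2) * v₁ r) (Set.Icc r₀ (r₀ + η)) r ∧
      HasDerivWithinAt v₁ (-((N - 1) / r) * v₁ r - f (u₁ r)) (Set.Icc r₀ (r₀ + η)) r)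
    (h₂ : ∀ r ∈ Set.Icc r₀ (r₀ + η),
      HasDerivWithinAt u₂ (|v₂ r| ^ (m / (m - 1) - 2) * v₂ r) (Set.Icc r₀ (r₀ + η)) r ∧
      HasDerivWithinAt v₂ (-((N - 1) / r) * v₂ r - f (u₂ r)) (Set.Icc r₀ (r₀ + η)) r)
    (hu₁0 : u₁ r₀ = u₀) (hu₂0 : u₂ r₀ = u₀)
    (hv₁0 : v₁ r₀ = 0) (hv₂0 : v₂ r₀ = 0) :
    ∃ δ : ℝ, 0 < δ ∧ δ ≤ η ∧
      ∀ r ∈ Set.Icc r₀ (r₀ + δ), u₁ r = u₂ r ∧ v₁ r = v₂ r := by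
  obtain ⟨ε, hε, K, hK⟩ := hlip
  set p := m / (m - 1) with hp
  have hp1 : 1 < p := by rw [hp, one_lt_div (by linarith)]; linarith
  have hp2 : p < 2 := by rw [hp, div_lt_iff₀ (by linarith)]; linarith
  have hsol₁ : IsSystemSolutionOn N p f (Icc r₀ (r₀ + η)) u₁ v₁ := h₁
  have hsol₂ : IsSystemSolutionOn N p f (Icc r₀ (r₀ + η)) u₂ v₂ := h₂
  have hf : ContinuousAt f u₀ := hK.continuousOn.continuousAt (Metric.ball_mem_nhds u₀ hε)
  have hc : 0 < |f u₀| / 2 := by positivity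
  obtain ⟨b, hb, hnear⟩ := mem_nhdsGE_iff_exists_Icc_subset.1
    ((hsol₁.eventually_near_initial hr₀ (by linarith) hf hu₁0 hv₁0 hε hc).and
      (hsol₂.eventually_near_initial hr₀ (by linarith) hf hu₂0 hv₂0 hε hc))
  set A := |N - 1| / r₀ + K
  obtain ⟨δ, ⟨hδ0, hδb⟩, hsmall⟩ := (Eventually.and (Ioo_mem_nhdsGT (lt_min hη (sub_pos.2 hb)))
    (nhdsWithin_le_nhds (eventually_mul_rpow_add_mul_lt_one
      ((p - 1) * (|f u₀| / 2) ^ (p - 2) * A / p) A (by linarith : 0 < p)))).exists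
  have hδη : δ ≤ η := hδb.le.trans (min_le_left _ _)
  have hIη : Icc r₀ (r₀ + δ) ⊆ Icc r₀ (r₀ + η) := Icc_subset_Icc_right (by linarith)
  have hIb : Icc r₀ (r₀ + δ) ⊆ Icc r₀ b :=
    Icc_subset_Icc_right (by linarith [min_le_right η (b - r₀)])
  exact ⟨δ, hδ0, hδη, (hsol₁.mono hIη).eqOn_of_near_initial hp1.le hp2.le hr₀ hδ0.le hfu₀ hK
    (hsol₂.mono hIη) (fun r hr => (hnear (hIb hr)).1) (fun r hr => (hnear (hIb hr)).2)
    (hu₁0.trans hu₂0.symm) hv₁0 hv₂0 hsmall⟩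

/-- local uniqueness for the first-order system when `m > 2`,
`f` is locally Lipschitz near `u₀` and `f(u₀) ≠ 0`, starting from `v = 0`. -/
theorem system_local_uniqueness
    (N m : ℝ) (hm : 2 < m) (hNm : m ≤ N)
    (r₀ η : ℝ) (hr₀ : 0 < r₀) (hη : 0 < η)
    (f : ℝ → ℝ) (u₀ : ℝ)
    (hlip : ∃ ε : ℝ, 0 < ε ∧ ∃ K : NNReal, LipschitzOnWith K f (Metric.ball u₀ ε))
    (hfu₀ : f u₀ ≠ 0)
    (u₁ v₁ u₂ v₂ : ℝ → ℝ)
    (h₁ : ∀ r ∈ Set.Icc r₀ (r₀ + η),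
      HasDerivWithinAt u₁ (|v₁ r| ^ (m / (m - 1) - 2) * v₁ r) (Set.Icc r₀ (r₀ + η)) r ∧
      HasDerivWithinAt v₁ (-((N - 1) / r) * v₁ r - f (u₁ r)) (Set.Icc r₀ (r₀ + η)) r)
    (h₂ : ∀ r ∈ Set.Icc r₀ (r₀ + η),
      HasDerivWithinAt u₂ (|v₂ r| ^ (m / (m - 1) - 2) * v₂ r) (Set.Icc r₀ (r₀ + η)) r ∧
      HasDerivWithinAt v₂ (-((N - 1) / r) * v₂ r - f (u₂ r)) (Set.Icc r₀ (r₀ + η)) r)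
    (hu₁0 : u₁ r₀ = u₀) (hu₂0 : u₂ r₀ = u₀)
    (hv₁0 : v₁ r₀ = 0) (hv₂0 : v₂ r₀ = 0) :
    ∃ δ : ℝ, 0 < δ ∧ δ ≤ η ∧
      ∀ r ∈ Set.Icc r₀ (r₀ + δ), u₁ r = u₂ r ∧ v₁ r = v₂ r :=
  system_local_uniqueness_general N m hm r₀ η hr₀ hη f u₀ hlip hfu₀ u₁ v₁ u₂ v₂ h₁ h₂ hu₁0 hu₂0 hv₁0
    hv₂0
end

section
/- Assume f : ℝ → ℝ is continuous and satisfies (f₂). Let u be a solution of the radial equation on an open interval around a point r* > 0 such that u'(r*) = 0, r* is a local maximum point of u, and γ⁻ < u(r*) < 0. Then f(u(r*)) ≥ 0, hence β⁻ ≤ u(r*) < 0, and consequently F(u(r*)) ≤ 0. -/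
open Set Filter MeasureTheory

open Topology

/-- at an interior local maximum with negative value above `γ⁻`,
one has `f(u(r*)) ≥ 0`, hence `β⁻ ≤ u(r*) < 0` and `F(u(r*)) ≤ 0`. -/
theorem local_max_negative_value
    (N m : ℝ) (hm : 1 < m) (hNm : m ≤ N) (f : ℝ → ℝ) (hf : Continuous f)
    (βm βp : ℝ) (γm γp : EReal) (hf2 : Hf2 f βm βp γm γp)
    (a b rs : ℝ) (hrs : rs ∈ Set.Ioo a b) (hrs0 : 0 < rs)
    (u u' : ℝ → ℝ) (hu : IsSolutionOn N m f (Set.Ioo a b) u u')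
    (hd : u' rs = 0) (hmax : IsLocalMaxOn u (Set.Ioo a b) rs)
    (h1 : γm < ((u rs : ℝ) : EReal)) (h2 : u rs < 0) :
    0 ≤ f (u rs) ∧ βm ≤ u rs ∧ Fint f (u rs) ≤ 0 := by
  obtain ⟨hu1, hu2, w', hw1, hw2, heq⟩ := hu
  set S : Set ℝ := Set.Ioo a b ∩ Set.Ioi 0 with hS_def
  have hSopen : IsOpen S := isOpen_Ioo.inter isOpen_Ioi
  have hrsS : rs ∈ S := ⟨hrs, hrs0⟩
  have hphim0 : phim m 0 = 0 := by simp [phim]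
  -- Step 1 : 0 ≤ f (u rs)
  have key : 0 ≤ f (u rs) := by
    by_contra hneg
    push_neg at hneg
    have hW : HasDerivAt (fun t => phim m (u' t)) (w' rs) rs :=
      (hw1 rs hrsS).hasDerivAt (hSopen.mem_nhds hrsS)
    have hval : w' rs = -f (u rs) := by
      have := heq rs hrsS
      rw [hd, hphim0] at this
      linarith
    have hpos : 0 < w' rs := by rw [hval]; linarith
    -- slope argument : w > 0 just to the right of rs
    have hslope := hasDerivAt_iff_tendsto_slope.mp hW
    have hev1 : ∀ᶠ r in 𝓝[>] rs, 0 < slope (fun t => phim m (u' t)) rs r := by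
      have h := hslope.eventually (eventually_gt_nhds hpos)
      exact (nhdsWithin_mono rs (fun x hx => ne_of_gt hx)) h
    have hIoo_nhds : Set.Ioo a b ∈ 𝓝 rs := isOpen_Ioo.mem_nhds hrs
    have hev2 : ∀ᶠ r in 𝓝[>] rs, r ∈ Set.Ioo a b :=
      mem_nhdsWithin_of_mem_nhds hIoo_nhds
    have hmax' : ∀ᶠ r in 𝓝[>] rs, u r ≤ u rs := by
      have h := hmax
      rw [IsLocalMaxOn, IsMaxFilter, nhdsWithin_eq_nhds.mpr hIoo_nhds] at h
      exact nhdsWithin_le_nhds h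
    have hall := (hev1.and hev2).and hmax'
    rw [eventually_nhdsWithin_iff] at hall
    obtain ⟨ε, hε, hball⟩ := Metric.eventually_nhds_iff.mp hall
    -- choose c with rs < c, all good properties on Ioo rs c
    obtain ⟨δ, hδpos, hδε, hδb⟩ : ∃ δ : ℝ, 0 < δ ∧ δ < ε ∧ rs + δ < b := by
      refine ⟨min ε (b - rs) / 2, ?_, ?_, ?_⟩
      · have := lt_min hε (sub_pos.mpr hrs.2); linarith
      · have := min_le_left ε (b - rs); linarith
      · have := min_le_right ε (b - rs); linarith [hrs.2]
    set c : ℝ := rs + δ with hc_def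
    have hrsc : rs < c := by rw [hc_def]; linarith
    have hgood : ∀ r ∈ Set.Ioo rs c,
        (0 < slope (fun t => phim m (u' t)) rs r ∧ r ∈ Set.Ioo a b) ∧ u r ≤ u rs := by
      intro r hr
      have hr2 : r < c := hr.2
      have hdist : dist r rs < ε := by
        rw [Real.dist_eq, abs_of_pos (by linarith [hr.1])]
        rw [hc_def] at hr2; linarith
      exact hball hdist hr.1
    -- u' > 0 on Ioo rs c
    have hupos : ∀ r ∈ Set.Ioo rs c, 0 < u' r := by
      intro r hr
      have hsl := (hgood r hr).1.1
      rw [slope_def_field] at hsl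
      rw [hd, hphim0] at hsl
      have hrpos : 0 < r - rs := by linarith [hr.1]
      have hw : 0 < phim m (u' r) := by
        rcases div_pos_iff.mp (by simpa using hsl) with ⟨h, _⟩ | ⟨_, h⟩
        · exact h
        · linarith
      by_contra hle
      push_neg at hle
      have : phim m (u' r) ≤ 0 :=
        mul_nonpos_of_nonneg_of_nonpos (Real.rpow_nonneg (abs_nonneg _) _) hle
      linarith
    -- u is strictly monotone on [rs, c']
    have hcb : c < b := by rw [hc_def]; linarith
    have hsub : Set.Icc rs c ⊆ Set.Ioo a b := fun x hx =>
      ⟨lt_of_lt_of_le hrs.1 hx.1, lt_of_le_of_lt hx.2 hcb⟩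
    have hcont : ContinuousOn u (Set.Icc rs c) := fun x hx =>
      ((hu1 x (hsub hx)).hasDerivAt (isOpen_Ioo.mem_nhds (hsub hx))).continuousAt.continuousWithinAt
    have hmono : StrictMonoOn u (Set.Icc rs c) := by
      apply strictMonoOn_of_deriv_pos (convex_Icc rs c) hcont
      intro x hx
      rw [interior_Icc] at hx
      have hda : HasDerivAt u (u' x) x :=
        (hu1 x (hsub ⟨le_of_lt hx.1, le_of_lt hx.2⟩)).hasDerivAt
          (isOpen_Ioo.mem_nhds (hsub ⟨le_of_lt hx.1, le_of_lt hx.2⟩))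
      rw [hda.deriv]
      exact hupos x hx
    have hlt : u rs < u ((rs + c) / 2) :=
      hmono ⟨le_refl rs, le_of_lt hrsc⟩ ⟨by linarith, by linarith⟩ (by linarith)
    have hle : u ((rs + c) / 2) ≤ u rs :=
      (hgood _ ⟨by linarith, by linarith⟩).2
    linarith
  -- Step 2 : βm ≤ u rs
  have hβ : βm ≤ u rs := by
    by_contra hlt
    push_neg at hlt
    have := hf2.hfneg (u rs) h1 hlt
    linarith
  -- Step 3 : Fint f (u rs) ≤ 0
  refine ⟨key, hβ, ?_⟩
  rcases eq_or_lt_of_le hβ with heqm | hltm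
  · rw [← heqm, hf2.hFβm]
  · exact le_of_lt (hf2.hFneg (u rs) ⟨hltm, lt_trans h2 hf2.hβp⟩ (ne_of_lt h2))
end

section
/- Let N > m > 1, m* = Nm/(N−m), λ > m/(N−m), and s₀ ≥ e². Let f : ℝ → ℝ be continuous with f(s) = s^(m*−1)/(log s)^λ for all s ≥ s₀. Then lim_{s→+∞} Q(s)·(s^(m−1)/f(s))^(N/m) = ∞. -/
open Set Filter MeasureTheory

/-! With `c = m*`, so that `c (N - m) = m N`, differentiating `Q` on `[s₀, ∞)` cancels the
leading terms and leaves `Q' = (N - m) λ s^(c-1) / (log s)^(λ+1) > 0`. Integrating over `[s/2, s]`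
alone shows that `Q(s) - Q(s₀)` is at least a multiple of `s^c / (log s)^(λ+1)`, while
`(s^(m-1) / f s)^(N/m) = (log s)^(λN/m) / s^c`. So the product is, up to a term tending to `0`, at
least a multiple of `(log s)^(λN/m - λ - 1)`, whose exponent is positive since `λ > m/(N-m)`. -/

open Real

namespace LogCritical

theorem hasDerivAt_rpow_div_log_rpow (c q : ℝ) {x : ℝ} (hx : 1 < x) :
    HasDerivAt (fun t => t ^ c / log t ^ q)
      (c * (x ^ (c - 1) / log x ^ q) - q * (x ^ (c - 1) / log x ^ (q + 1))) x := by
  have hx0 : 0 < x := by linarith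
  have hlog : 0 < log x := log_pos hx
  have h := (hasDerivAt_rpow_const (p := c) (Or.inl hx0.ne')).div
    ((hasDerivAt_rpow_const (p := q) (Or.inl hlog.ne')).comp x (hasDerivAt_log hx0.ne'))
    (rpow_pos_of_pos hlog q).ne'
  refine HasDerivAt.congr_deriv (f := fun t => t ^ c / log t ^ q) h ?_
  simp only [Function.comp_apply]
  rw [rpow_add hlog, rpow_one, rpow_sub_one hlog.ne', rpow_sub_one hx0.ne']
  have hlogq : log x ^ q ≠ 0 := (rpow_pos_of_pos hlog q).ne'
  field_simp

theorem continuousOn_rpow_div_log_rpow (p q : ℝ) :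
    ContinuousOn (fun t : ℝ => t ^ p / log t ^ q) (Ioi 1) := by
  intro x (hx : 1 < x)
  have hx0 : x ≠ 0 := by positivity
  exact ((continuousAt_rpow_const x p (Or.inl hx0)).div
    ((continuousAt_rpow_const _ q (Or.inl (log_pos hx).ne')).comp (continuousAt_log hx0))
    (rpow_pos_of_pos (log_pos hx) q).ne').continuousWithinAt

theorem intervalIntegrable_rpow_div_log_rpow (p q : ℝ) {a b : ℝ} (ha : 1 < a) (hab : a ≤ b) :
    IntervalIntegrable (fun t : ℝ => t ^ p / log t ^ q) volume a b :=
  ((continuousOn_rpow_div_log_rpow p q).mono fun _ ht =>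
    ha.trans_le (uIcc_of_le hab ▸ ht).1).intervalIntegrable

theorem integral_rpow_div_log_rpow (c q : ℝ) {a b : ℝ} (ha : 1 < a) (hab : a ≤ b) :
    c * ∫ t in a..b, t ^ (c - 1) / log t ^ q =
      b ^ c / log b ^ q - a ^ c / log a ^ q + q * ∫ t in a..b, t ^ (c - 1) / log t ^ (q + 1) := by
  have h₁ := intervalIntegrable_rpow_div_log_rpow (c - 1) q ha hab
  have h₂ := intervalIntegrable_rpow_div_log_rpow (c - 1) (q + 1) ha hab
  have hftc := intervalIntegral.integral_eq_sub_of_hasDerivAt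
    (fun t ht => hasDerivAt_rpow_div_log_rpow c q (ha.trans_le (uIcc_of_le hab ▸ ht).1))
    ((h₁.const_mul c).sub (h₂.const_mul q))
  rw [intervalIntegral.integral_sub (h₁.const_mul c) (h₂.const_mul q),
    intervalIntegral.integral_const_mul, intervalIntegral.integral_const_mul] at hftc
  linarith

theorem integral_rpow_div_log_rpow_half_ge {c q s : ℝ} (hc : 0 < c) (hq : 0 ≤ q) (hs : 2 < s) :
    (1 - 2 ^ (-c)) / c * (s ^ c / log s ^ q) ≤ ∫ t in s / 2..s, t ^ (c - 1) / log t ^ q := by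
  have hs0 : 0 < s := by linarith
  have hhalf : 1 < s / 2 := by linarith
  have hle : s / 2 ≤ s := by linarith
  have hpow : ∫ t in s / 2..s, t ^ (c - 1) = (1 - 2 ^ (-c)) / c * s ^ c := by
    rw [integral_rpow (Or.inl (by linarith)), sub_add_cancel,
      div_rpow hs0.le zero_le_two, rpow_neg zero_le_two]
    field_simp
  calc (1 - 2 ^ (-c)) / c * (s ^ c / log s ^ q)
      = ∫ t in s / 2..s, t ^ (c - 1) / log s ^ q := by
        rw [intervalIntegral.integral_div, hpow, mul_div_assoc]
    _ ≤ ∫ t in s / 2..s, t ^ (c - 1) / log t ^ q := by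
        refine intervalIntegral.integral_mono_on hle
          ((intervalIntegral.intervalIntegrable_rpow' (by linarith)).div_const _)
          (intervalIntegrable_rpow_div_log_rpow _ _ hhalf hle) fun t ht => ?_
        have hlogt : 0 < log t := log_pos (hhalf.trans_le ht.1)
        exact div_le_div_of_nonneg_left (rpow_nonneg (by linarith [ht.1]) _)
          (rpow_pos_of_pos hlogt q)
          (rpow_le_rpow hlogt.le (log_le_log (by linarith [ht.1]) ht.2) hq)

variable {N m c lam s₀ : ℝ} {f : ℝ → ℝ}

theorem Qfun_eq_add_integral (hc : c * (N - m) = m * N) (hs₀ : 1 < s₀) (hf : Continuous f)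
    (hfs : ∀ s, s₀ ≤ s → f s = s ^ (c - 1) / log s ^ lam) {s : ℝ} (hs : s₀ ≤ s) :
    Qfun N m f s = Qfun N m f s₀ +
      (N - m) * lam * ∫ t in s₀..s, t ^ (c - 1) / log t ^ (lam + 1) := by
  have hFint : Fint f s = Fint f s₀ + ∫ t in s₀..s, t ^ (c - 1) / log t ^ lam := by
    rw [Fint, Fint, ← intervalIntegral.integral_add_adjacent_intervals
      (hf.intervalIntegrable 0 s₀) (hf.intervalIntegrable s₀ s)]
    congr 1
    exact intervalIntegral.integral_congr fun t ht => hfs t (uIcc_of_le hs ▸ ht).1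
  have hmul : ∀ x, s₀ ≤ x → x * f x = x ^ c / log x ^ lam := fun x hx => by
    have hx0 : 0 < x := by linarith
    rw [hfs x hx, rpow_sub_one hx0.ne']
    field_simp
  have hident := integral_rpow_div_log_rpow c lam hs₀ hs
  simp only [Qfun]
  rw [hFint, mul_assoc (N - m) s, mul_assoc (N - m) s₀, hmul s hs, hmul s₀ le_rfl]
  linear_combination (N - m) * hident - (∫ t in s₀..s, t ^ (c - 1) / log t ^ lam) * hc

theorem rpow_div_rpow_div_log_rpow (hc : c * (N - m) = m * N) (hm : m ≠ 0) {s : ℝ} (hs : 1 < s) :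
    (s ^ (m - 1) / (s ^ (c - 1) / log s ^ lam)) ^ (N / m) = log s ^ (lam * (N / m)) / s ^ c := by
  have hs0 : 0 < s := by linarith
  have hlog : 0 < log s := log_pos hs
  have hexp : (m - c) * (N / m) = -c := by
    field_simp
    linear_combination -hc
  have hbase : s ^ (m - 1) / (s ^ (c - 1) / log s ^ lam) = log s ^ lam * s ^ (m - c) := by
    rw [show m - c = m - 1 - (c - 1) by ring, rpow_sub hs0 (m - 1) (c - 1), div_div_eq_mul_div]
    ring
  rw [hbase, mul_rpow (rpow_nonneg hlog.le _) (rpow_nonneg hs0.le _), ← rpow_mul hlog.le,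
    ← rpow_mul hs0.le, hexp, rpow_neg hs0.le]
  ring

theorem Qfun_mul_rpow_ge (hc : c * (N - m) = m * N) (hcpos : 0 < c) (hm : m ≠ 0) (hNm : m < N)
    (hlam : 0 ≤ lam) (hs₀ : 1 < s₀) (hf : Continuous f)
    (hfs : ∀ s, s₀ ≤ s → f s = s ^ (c - 1) / log s ^ lam) {s : ℝ} (hs : 2 * s₀ ≤ s) :
    Qfun N m f s₀ * (log s ^ (lam * (N / m)) / s ^ c) +
        (N - m) * lam * ((1 - 2 ^ (-c)) / c) * log s ^ (lam * (N / m) - (lam + 1)) ≤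
      Qfun N m f s * (s ^ (m - 1) / f s) ^ (N / m) := by
  have hs₀s : s₀ ≤ s := by linarith
  have hs1 : 1 < s := by linarith
  have hlog : 0 < log s := log_pos hs1
  have hX : 0 ≤ log s ^ (lam * (N / m)) / s ^ c := by positivity
  set I := ∫ t in s₀..s, t ^ (c - 1) / log t ^ (lam + 1)
  have hhalf : ∫ t in s / 2..s, t ^ (c - 1) / log t ^ (lam + 1) ≤ I := by
    have hsplit := intervalIntegral.integral_add_adjacent_intervals
      (intervalIntegrable_rpow_div_log_rpow (c - 1) (lam + 1) hs₀ (by linarith : s₀ ≤ s / 2))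
      (intervalIntegrable_rpow_div_log_rpow (c - 1) (lam + 1) (by linarith : 1 < s / 2)
        (by linarith : s / 2 ≤ s))
    have hnonneg : 0 ≤ ∫ t in s₀..s / 2, t ^ (c - 1) / log t ^ (lam + 1) :=
      intervalIntegral.integral_nonneg (by linarith) fun t ht =>
        div_nonneg (rpow_nonneg (by linarith [ht.1]) _)
          (rpow_nonneg (log_nonneg (by linarith [ht.1])) _)
    linarith
  have hI := (integral_rpow_div_log_rpow_half_ge hcpos (by linarith) (by linarith)).trans hhalf
  have hpow : s ^ c / log s ^ (lam + 1) * (log s ^ (lam * (N / m)) / s ^ c) =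
      log s ^ (lam * (N / m) - (lam + 1)) := by
    rw [rpow_sub hlog]
    have hsc : s ^ c ≠ 0 := (rpow_pos_of_pos (by linarith) c).ne'
    field_simp
  rw [Qfun_eq_add_integral hc hs₀ hf hfs hs₀s, hfs s hs₀s, rpow_div_rpow_div_log_rpow hc hm hs1,
    ← hpow]
  have hNlam : 0 ≤ (N - m) * lam := mul_nonneg (by linarith) hlam
  nlinarith [mul_le_mul_of_nonneg_right hI hX]

end LogCritical

open LogCritical in
/-- the critical nonlinearity with logarithmic correction
satisfies the key limit in (f₃). -/
theorem log_critical_example_limit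
    (N m : ℝ) (hm : 1 < m) (hNm : m < N) (lam s₀ : ℝ)
    (hlam : m / (N - m) < lam) (hs₀ : Real.exp 2 ≤ s₀)
    (f : ℝ → ℝ) (hf : Continuous f)
    (hfs : ∀ s : ℝ, s₀ ≤ s → f s = s ^ (N * m / (N - m) - 1) / (Real.log s) ^ lam) :
    Filter.Tendsto (fun s : ℝ => Qfun N m f s * (s ^ (m - 1) / f s) ^ (N / m))
      Filter.atTop Filter.atTop := by
  set c := N * m / (N - m) with hc_def
  have hNm' : 0 < N - m := by linarith
  have hc : c * (N - m) = m * N := by rw [hc_def, div_mul_cancel₀ _ hNm'.ne']; ring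
  have hcpos : 0 < c := div_pos (mul_pos (by linarith) (by linarith)) hNm'
  have hlam0 : 0 < lam := (div_pos (by linarith) hNm').trans hlam
  have hε : 0 < lam * (N / m) - (lam + 1) := by
    rw [div_lt_iff₀ hNm'] at hlam
    rw [mul_div_assoc', lt_sub_iff_add_lt, zero_add, lt_div_iff₀ (by linarith)]
    linarith
  have hκ : 0 < (N - m) * lam * ((1 - 2 ^ (-c)) / c) := by
    have : (2 : ℝ) ^ (-c) < 1 := rpow_lt_one_of_one_lt_of_neg one_lt_two (neg_neg_of_pos hcpos)
    exact mul_pos (mul_pos hNm' hlam0) (div_pos (by linarith) hcpos)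
  have hs₀1 : 1 < s₀ := (Real.one_lt_exp_iff.mpr two_pos).trans_le hs₀
  refine tendsto_atTop_mono' atTop ((eventually_ge_atTop (2 * s₀)).mono fun s hs =>
    Qfun_mul_rpow_ge hc hcpos (by linarith) hNm hlam0.le hs₀1 hf hfs hs) ?_
  exact ((isLittleO_log_rpow_rpow_atTop _ hcpos).tendsto_div_nhds_zero.const_mul _).add_atTop
    (((tendsto_rpow_atTop hε).comp tendsto_log_atTop).const_mul_atTop hκ)
end

section
/- Let N > m > 1, m* = Nm/(N−m), λ > 0, and s₀ ≥ e². Let f : ℝ → ℝ be continuous with f(s) = s^(m*−1)/(log s)^λ for all s ≥ s₀. Then lim_{s→+∞} s·f(s)/F(s) = m*; in particular limsup_{s→+∞} s·f(s)/F(s) = m*, so the strict subcriticality condition limsup_{s→+∞} s·f(s)/F(s) < m* fails for this f. -/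
/-!
With `m* = N m / (N - m)` and `H s = s ^ m* / (log s) ^ λ`, we have `H s = s f(s)` for large
`s`, `H' = (m* - λ / log s) f ~ m* f`, and `H → ∞`. An integrated form of L'Hôpital's rule for
`∞/∞` then gives `m* F ~ H = s f`, so `s f(s) / F(s) → m*`.
-/

open Set Filter MeasureTheory

open Asymptotics Real Topology

theorem Asymptotics.IsEquivalent.of_hasDerivAt_atTop {F G f g : ℝ → ℝ}
    (hF : ∀ᶠ x in atTop, HasDerivAt F (f x) x) (hG : ∀ᶠ x in atTop, HasDerivAt G (g x) x)
    (hg : ∀ᶠ x in atTop, 0 ≤ g x) (hfg : f ~[atTop] g) (hGtop : Tendsto G atTop atTop) :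
    F ~[atTop] G := by
  rw [IsEquivalent, isLittleO_iff]
  intro c hc
  obtain ⟨b, hb⟩ := eventually_atTop.1
    (hF.and (hG.and (hg.and (hfg.isLittleO.def (half_pos hc)))))
  have hderiv (x : ℝ) (hx : b ≤ x) :
      HasDerivAt (fun y => F y - G y - (F b - G b)) (f x - g x) x :=
    ((hb x hx).1.sub (hb x hx).2.1).sub_const _
  have hbound (x : ℝ) (hx : b ≤ x) :
      HasDerivAt (fun y => c / 2 * (G y - G b)) (c / 2 * g x) x :=
    ((hb x hx).2.1.sub_const (G b)).const_mul (c / 2)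
  have hfence (x : ℝ) (hx : b ≤ x) : |F x - G x - (F b - G b)| ≤ c / 2 * (G x - G b) := by
    refine image_norm_le_of_norm_deriv_right_le_deriv_boundary'
      (fun y hy => (hderiv y hy.1).continuousAt.continuousWithinAt)
      (fun y hy => (hderiv y hy.1).hasDerivWithinAt) (by simp)
      (fun y hy => (hbound y hy.1).continuousAt.continuousWithinAt)
      (fun y hy => (hbound y hy.1).hasDerivWithinAt) (fun y hy => ?_) ⟨hx, le_rfl⟩
    have := (hb y hy.1).2.2.2
    rwa [Real.norm_of_nonneg (hb y hy.1).2.2.1] at this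
  filter_upwards [eventually_ge_atTop b, hGtop.eventually_ge_atTop 0,
    (hGtop.const_mul_atTop (half_pos hc)).eventually_ge_atTop (|F b - G b| + c / 2 * |G b|)]
    with x hx hGx hlarge
  rw [Pi.sub_apply, Real.norm_eq_abs, Real.norm_eq_abs, abs_of_nonneg hGx]
  nlinarith [abs_sub_abs_le_abs_sub (F x - G x) (F b - G b), hfence x hx, neg_abs_le (G b)]

theorem hasDerivAt_rpow_div_log_rpow (a lam : ℝ) {t : ℝ} (ht : 1 < t) :
    HasDerivAt (fun s => s ^ a / log s ^ lam)
      ((a - lam / log t) * (t ^ (a - 1) / log t ^ lam)) t := by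
  have ht0 : 0 < t := by linarith
  have hlog : 0 < log t := log_pos ht
  have h := (hasDerivAt_rpow_const (p := a) (Or.inl ht0.ne')).div
    ((hasDerivAt_log ht0.ne').rpow_const (p := lam) (Or.inl hlog.ne'))
    (rpow_pos_of_pos hlog lam).ne'
  refine h.congr_deriv ?_
  rw [rpow_sub_one ht0.ne', rpow_sub_one hlog.ne']
  field_simp

theorem tendsto_rpow_div_log_rpow_atTop {a : ℝ} (ha : 0 < a) (lam : ℝ) :
    Tendsto (fun s => s ^ a / log s ^ lam) atTop atTop := by
  refine ((tendsto_exp_mul_div_rpow_atTop lam a ha).comp tendsto_log_atTop).congr' ?_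
  filter_upwards [eventually_gt_atTop 0] with s hs
  simp [rpow_def_of_pos hs, mul_comm]

theorem rpow_div_log_rpow_pos (a lam : ℝ) {t : ℝ} (ht : 1 < t) : 0 < t ^ a / log t ^ lam :=
  div_pos (rpow_pos_of_pos (by linarith) a) (rpow_pos_of_pos (log_pos ht) lam)

section LogCorrectedPower

variable {f : ℝ → ℝ} {a lam : ℝ}

theorem isEquivalent_const_mul_Fint (hf : Continuous f) (ha : 0 < a)
    (hfa : ∀ᶠ s in atTop, f s = s ^ (a - 1) / log s ^ lam) :
    (fun s => a * Fint f s) ~[atTop] fun s => s ^ a / log s ^ lam := by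
  have hq : Tendsto (fun t => a - lam / log t) atTop (𝓝 a) := by
    simpa using tendsto_const_nhds.sub (tendsto_const_nhds.div_atTop tendsto_log_atTop)
  have hfg : (fun t => a * f t) ~[atTop] fun t => (a - lam / log t) * f t :=
    ((isEquivalent_const_iff_tendsto ha.ne').2 hq).symm.mul IsEquivalent.refl
  have hg : ∀ᶠ t in atTop, 0 ≤ (a - lam / log t) * f t := by
    filter_upwards [hq.eventually (lt_mem_nhds ha), hfa, eventually_gt_atTop 1]
      with t hqt hft ht
    rw [hft]
    exact mul_nonneg (by linarith) (rpow_div_log_rpow_pos _ _ ht).le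
  refine IsEquivalent.of_hasDerivAt_atTop (.of_forall fun x => ?_) ?_ hg hfg
    (tendsto_rpow_div_log_rpow_atTop ha lam)
  · exact (hf.integral_hasStrictDerivAt 0 x).hasDerivAt.const_mul a
  · filter_upwards [hfa, eventually_gt_atTop 1] with t hft ht
    rw [hft]
    exact hasDerivAt_rpow_div_log_rpow a lam ht

theorem tendsto_mul_div_Fint (hf : Continuous f) (ha : 0 < a)
    (hfa : ∀ᶠ s in atTop, f s = s ^ (a - 1) / log s ^ lam) :
    Tendsto (fun s => s * f s / Fint f s) atTop (𝓝 a) := by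
  have hsf : (fun s => s ^ a / log s ^ lam) =ᶠ[atTop] fun s => s * f s := by
    filter_upwards [hfa, eventually_gt_atTop 0] with s hfs hs
    rw [hfs, rpow_sub_one hs.ne']
    field_simp
  have hequiv := (isEquivalent_const_mul_Fint hf ha hfa).trans_eventuallyEq hsf
  have hpos : ∀ᶠ s in atTop, 0 < a * Fint f s := by
    refine hequiv.eventually_pos ?_
    filter_upwards [hsf, eventually_gt_atTop 1] with s hs ht
    exact hs ▸ rpow_div_log_rpow_pos a lam ht
  have hlim := ((isEquivalent_iff_tendsto_one (hpos.mono fun _ => ne_of_gt)).1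
    hequiv.symm).const_mul a
  rw [mul_one] at hlim
  refine hlim.congr fun s => ?_
  simp only [Pi.div_apply]
  rw [← mul_div_assoc, mul_div_mul_left _ _ ha.ne']

end LogCorrectedPower

theorem log_critical_example_not_subcritical_general
    (N m : ℝ) (hm : 1 < m) (hNm : m < N) (lam s₀ : ℝ)
    (f : ℝ → ℝ) (hf : Continuous f)
    (hfs : ∀ s : ℝ, s₀ ≤ s → f s = s ^ (N * m / (N - m) - 1) / (Real.log s) ^ lam) :
    Filter.Tendsto (fun s : ℝ => s * f s / Fint f s) Filter.atTop
      (nhds (N * m / (N - m))) ∧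
    Filter.limsup (fun s : ℝ => s * f s / Fint f s) Filter.atTop = N * m / (N - m) ∧
    ¬ Filter.limsup (fun s : ℝ => s * f s / Fint f s) Filter.atTop
        < N * m / (N - m) := by
  have hA : 0 < N * m / (N - m) := div_pos (by nlinarith) (by linarith)
  have htend := tendsto_mul_div_Fint hf hA (eventually_atTop.2 ⟨s₀, hfs⟩)
  exact ⟨htend, htend.limsup_eq, htend.limsup_eq.not_lt⟩

/-- for the log-corrected critical nonlinearity,
`s f(s)/F(s) → m*`, so the strict subcriticality condition fails. -/
theorem log_critical_example_not_subcritical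
    (N m : ℝ) (hm : 1 < m) (hNm : m < N) (lam s₀ : ℝ)
    (hlam : 0 < lam) (hs₀ : Real.exp 2 ≤ s₀)
    (f : ℝ → ℝ) (hf : Continuous f)
    (hfs : ∀ s : ℝ, s₀ ≤ s → f s = s ^ (N * m / (N - m) - 1) / (Real.log s) ^ lam) :
    Filter.Tendsto (fun s : ℝ => s * f s / Fint f s) Filter.atTop
      (nhds (N * m / (N - m))) ∧
    Filter.limsup (fun s : ℝ => s * f s / Fint f s) Filter.atTop = N * m / (N - m) ∧
    ¬ Filter.limsup (fun s : ℝ => s * f s / Fint f s) Filter.atTop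
        < N * m / (N - m) :=
  log_critical_example_not_subcritical_general N m hm hNm lam s₀ f hf hfs
end
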